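/- Let κ : F₂' → ℤ be a group homomorphism such that for every u ∈ F₂, κ(u [x,y] u⁻¹) = 1 if exp_y(u) ≡ 0 or 1 (mod 4), and κ(u [x,y] u⁻¹) = −1 if exp_y(u) ≡ 2 or 3 (mod 4). If z ∈ F₂' is a product of fourth powers in F₂ (i.e. z = u₁⁴ u₂⁴ ⋯ u_s⁴ for some s ≥ 1 and u₁, …, u_s ∈ F₂), then 4 divides κ(z). -/

import Mathlib

/-- The total exponent of `x` in a word of the free group on `{x, y}`. -/
def expx (w : FreeGroup (Fin 2)) : ℤ :=
  Multiplicative.toAdd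
    (FreeGroup.lift (fun i => Multiplicative.ofAdd (if i = 0 then (1 : ℤ) else 0)) w)

/-- The total exponent of `y` in a word of the free group on `{x, y}`. -/
def expy (w : FreeGroup (Fin 2)) : ℤ :=
  Multiplicative.toAdd
    (FreeGroup.lift (fun i => Multiplicative.ofAdd (if i = 1 then (1 : ℤ) else 0)) w)

open scoped commutatorElement

/-! κ is computed modulo 4 inside the wreath product `ℤ/4 ≀ ℤ/4` of pairs `(m, q)` with
`m : ℤ/4 → ℤ/4`. Send `x ↦ (δ₀, 0)` and `y ↦ (0, 1)`. Then `F₂'` lands in the base group, and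
`u [x,y] u⁻¹` goes to `δ₀ - δ₁` shifted by `exp_y(u)`. The linear form with weights `(0, 3, 2, 3)`
takes the value `1, 1, -1, -1` on the four shifts of `δ₀ - δ₁`, exactly as κ does on the
conjugates; as `F₂'` is the normal closure of `[x,y]`, κ mod 4 is this form composed with the
homomorphism. A fourth power `(m, q)⁴` is `(m + t^q m + t^(2q) m + t^(3q) m, 0)`, where `t` is the
shift, and the form also kills all of these; hence it kills every product of fourth powers. -/

namespace Subgroup

variable {G : Type*} [Group G]

theorem commutator_eq_normalClosure_of_closure_pair_eq_top {a b : G}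
    (hab : closure {a, b} = ⊤) : _root_.commutator G = normalClosure {⁅a, b⁆} := by
  refine le_antisymm ?_ (normalClosure_le_normal (Set.singleton_subset_iff.2
    (commutator_mem_commutator (mem_top a) (mem_top b))))
  set N := normalClosure {⁅a, b⁆}
  let π := QuotientGroup.mk' N
  have hπab : π a * π b = π b * π a := by
    rw [← commute_iff_eq, ← commutatorElement_eq_one_iff_commute, ← map_commutatorElement,
      QuotientGroup.mk'_apply, QuotientGroup.eq_one_iff]
    exact subset_normalClosure rfl
  have hgen : closure {π a, π b} = ⊤ := by
    rw [← Set.image_pair, ← MonoidHom.map_closure, hab,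
      map_top_of_surjective _ (QuotientGroup.mk'_surjective N)]
  have hcomm : IsMulCommutative (closure {π a, π b}) := by
    refine isMulCommutative_closure ?_
    rintro x (rfl | rfl) y (rfl | rfl) <;> first | rfl | exact hπab | exact hπab.symm
  rw [_root_.commutator_def, commutator_le]
  intro g _ h _
  rw [← QuotientGroup.eq_one_iff (N := N), ← QuotientGroup.mk'_apply, map_commutatorElement,
    commutatorElement_eq_one_iff_commute]
  exact congrArg Subtype.val
    (hcomm.is_comm.comm ⟨π g, hgen ▸ mem_top _⟩ ⟨π h, hgen ▸ mem_top _⟩)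

end Subgroup

theorem MonoidHom.eq_of_eqOn_conjugatesOfSet {G M : Type*} [Group G] [Monoid M]
    {H : Subgroup G} {S : Set G} (hH : H = Subgroup.normalClosure S) {f g : H →* M}
    (hfg : ∀ x (hx : x ∈ H), x ∈ Group.conjugatesOfSet S → f ⟨x, hx⟩ = g ⟨x, hx⟩) : f = g := by
  subst hH
  ext ⟨x, hx⟩
  have hle :
      Subgroup.normalClosure S ≤ (eqLocus f g).map (Subgroup.normalClosure S).subtype := by
    refine (Subgroup.closure_le _).2 ?_
    intro y hy
    exact ⟨⟨y, Subgroup.conjugatesOfSet_subset_normalClosure hy⟩, hfg y _ hy, rfl⟩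
  obtain ⟨⟨y, hy⟩, hfgy, rfl⟩ := hle hx
  exact hfgy

namespace RegularWreathProduct

variable {D Q : Type*} [Group Q]

theorem left_mul_of_right_eq_one [Group D] {a : D ≀ᵣ Q} (ha : a.right = 1) (b : D ≀ᵣ Q) :
    (a * b).left = a.left * b.left := by
  simp [mul_left, ha]

theorem left_inv_of_right_eq_one [Group D] {a : D ≀ᵣ Q} (ha : a.right = 1) :
    a⁻¹.left = a.left⁻¹ := by
  ext x
  simp [inv_left, ha]

theorem left_conj_of_right_eq_one [CommGroup D] (g : D ≀ᵣ Q) {h : D ≀ᵣ Q}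
    (hh : h.right = 1) : (g * h * g⁻¹).left = fun x ↦ h.left (g.right⁻¹ * x) := by
  ext x
  simp [mul_left, inv_left, mul_right, hh]

end RegularWreathProduct

namespace FourthPowerCommutator

open Multiplicative RegularWreathProduct

abbrev C4 := Multiplicative (ZMod 4)

abbrev W := C4 ≀ᵣ C4

abbrev commXY : FreeGroup (Fin 2) := ⁅FreeGroup.of (0 : Fin 2), FreeGroup.of (1 : Fin 2)⁆

def weight : (C4 → C4) →* C4 where
  toFun m := m (ofAdd 1) ^ 3 * m (ofAdd 2) ^ 2 * m (ofAdd 3) ^ 3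
  map_one' := by simp
  map_mul' a b := by simp only [Pi.mul_apply, mul_pow]; ac_rfl

def weightKer : Subgroup W where
  carrier := {g | g.right = 1 ∧ weight g.left = 1}
  one_mem' := ⟨rfl, map_one weight⟩
  mul_mem' := by
    rintro a b ⟨ha, ha'⟩ ⟨hb, hb'⟩
    refine ⟨by simp [mul_right, ha, hb], ?_⟩
    rw [left_mul_of_right_eq_one ha, map_mul, ha', hb', one_mul]
  inv_mem' := by
    rintro a ⟨ha, ha'⟩
    exact ⟨by simp [inv_right, ha], by rw [left_inv_of_right_eq_one ha, map_inv, ha', inv_one]⟩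

theorem mem_weightKer {g : W} : g ∈ weightKer ↔ g.right = 1 ∧ weight g.left = 1 := Iff.rfl

theorem pow_four_mem_weightKer (g : W) : g ^ 4 ∈ weightKer := by
  obtain ⟨m, q⟩ := g
  rw [mem_weightKer]
  revert m q
  decide +kernel

-- In `C4` the point `0` is written `1`, so `Pi.mulSingle 1 (ofAdd 1)` is `δ₀`.
def toWreath : FreeGroup (Fin 2) →* W :=
  FreeGroup.lift ![⟨Pi.mulSingle 1 (ofAdd 1), 1⟩, ⟨1, ofAdd 1⟩]

def intCastHom : Multiplicative ℤ →* C4 := (Int.castAddHom (ZMod 4)).toMultiplicative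

theorem toWreath_right (w : FreeGroup (Fin 2)) :
    (toWreath w).right = ofAdd (expy w : ZMod 4) := by
  have h : rightHom.comp toWreath =
      intCastHom.comp (FreeGroup.lift fun i ↦ ofAdd (if i = 1 then (1 : ℤ) else 0)) := by
    ext i
    fin_cases i <;> rfl
  exact DFunLike.congr_fun h w

theorem toWreath_right_of_mem_commutator {w : FreeGroup (Fin 2)}
    (hw : w ∈ commutator (FreeGroup (Fin 2))) : (toWreath w).right = 1 :=
  Abelianization.commutator_subset_ker (rightHom.comp toWreath) hw

def commutatorWeight : commutator (FreeGroup (Fin 2)) →* C4 where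
  toFun w := weight (toWreath w).left
  map_one' := by simp [one_left]
  map_mul' a b := by
    rw [Subgroup.coe_mul, map_mul,
      left_mul_of_right_eq_one (toWreath_right_of_mem_commutator a.2), map_mul]

theorem commutator_freeGroup_eq_normalClosure :
    commutator (FreeGroup (Fin 2)) = Subgroup.normalClosure {commXY} := by
  refine Subgroup.commutator_eq_normalClosure_of_closure_pair_eq_top ?_
  rw [← FreeGroup.closure_range_of]
  congr 1
  ext w
  simp [Fin.exists_fin_two, eq_comm]

theorem weight_left_toWreath_conj (u : FreeGroup (Fin 2)) :
    ((expy u % 4 = 0 ∨ expy u % 4 = 1) →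
        weight (toWreath (u * commXY * u⁻¹)).left = ofAdd 1) ∧
      ((expy u % 4 = 2 ∨ expy u % 4 = 3) →
        weight (toWreath (u * commXY * u⁻¹)).left = ofAdd (-1)) := by
  have hc : (toWreath commXY).right = 1 :=
    toWreath_right_of_mem_commutator
      (commutator_freeGroup_eq_normalClosure ▸ Subgroup.subset_normalClosure rfl)
  rw [map_mul, map_mul, map_inv, left_conj_of_right_eq_one _ hc, toWreath_right,
    ← ZMod.intCast_mod]
  have h0 := Int.emod_nonneg (expy u) (by norm_num : (4 : ℤ) ≠ 0)
  have h4 := Int.emod_lt_of_pos (expy u) (by norm_num : (0 : ℤ) < 4)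
  generalize expy u % 4 = r at h0 h4 ⊢
  interval_cases r <;> decide

theorem intCastHom_comp_eq_commutatorWeight
    (κ : commutator (FreeGroup (Fin 2)) →* Multiplicative ℤ)
    (hκ : ∀ (u : FreeGroup (Fin 2)) (w : commutator (FreeGroup (Fin 2))),
      (w : FreeGroup (Fin 2)) = u * commXY * u⁻¹ →
      ((expy u % 4 = 0 ∨ expy u % 4 = 1) → κ w = ofAdd 1) ∧
      ((expy u % 4 = 2 ∨ expy u % 4 = 3) → κ w = ofAdd (-1))) :
    intCastHom.comp κ = commutatorWeight := by
  refine MonoidHom.eq_of_eqOn_conjugatesOfSet commutator_freeGroup_eq_normalClosure ?_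
  intro x hx hconj
  obtain ⟨_, rfl, u, rfl⟩ : ∃ c ∈ ({commXY} : Set _), ∃ u, u * c * u⁻¹ = x := by
    simpa only [Group.mem_conjugatesOfSet_iff, isConj_iff] using hconj
  obtain ⟨hκlo, hκhi⟩ := hκ u ⟨_, hx⟩ rfl
  obtain ⟨hwlo, hwhi⟩ := weight_left_toWreath_conj u
  show intCastHom (κ ⟨_, hx⟩) = weight (toWreath _).left
  by_cases hlo : expy u % 4 = 0 ∨ expy u % 4 = 1
  · rw [hκlo hlo, hwlo hlo]; rfl
  · have hhi : expy u % 4 = 2 ∨ expy u % 4 = 3 := by omega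
    rw [hκhi hhi, hwhi hhi]; rfl

end FourthPowerCommutator

open FourthPowerCommutator in
theorem stmt_16_general
    (κ : ↥(commutator (FreeGroup (Fin 2))) →* Multiplicative ℤ)
    (hκ : ∀ (u : FreeGroup (Fin 2)) (w : ↥(commutator (FreeGroup (Fin 2)))),
      (w : FreeGroup (Fin 2)) =
          u * ⁅FreeGroup.of (0 : Fin 2), FreeGroup.of (1 : Fin 2)⁆ * u⁻¹ →
      ((expy u % 4 = 0 ∨ expy u % 4 = 1) → κ w = Multiplicative.ofAdd (1 : ℤ)) ∧
      ((expy u % 4 = 2 ∨ expy u % 4 = 3) → κ w = Multiplicative.ofAdd (-1 : ℤ)))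
    (z : ↥(commutator (FreeGroup (Fin 2))))
    (L : List (FreeGroup (Fin 2)))
    (hz : (z : FreeGroup (Fin 2)) = (L.map (fun u => u ^ 4)).prod) :
    (4 : ℤ) ∣ Multiplicative.toAdd (κ z) := by
  have hz4 : toWreath z ∈ weightKer := by
    rw [hz, map_list_prod, List.map_map]
    refine Subgroup.list_prod_mem _ fun g hg ↦ ?_
    obtain ⟨u, -, rfl⟩ := List.mem_map.1 hg
    simpa only [Function.comp_apply, map_pow] using pow_four_mem_weightKer (toWreath u)
  have hκz : intCastHom (κ z) = 1 := by
    rw [← MonoidHom.comp_apply, intCastHom_comp_eq_commutatorWeight κ hκ]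
    exact (mem_weightKer.1 hz4).2
  exact_mod_cast (ZMod.intCast_zmod_eq_zero_iff_dvd _ 4).1 (congrArg Multiplicative.toAdd hκz)

theorem stmt_16
    (κ : ↥(commutator (FreeGroup (Fin 2))) →* Multiplicative ℤ)
    (hκ : ∀ (u : FreeGroup (Fin 2)) (w : ↥(commutator (FreeGroup (Fin 2)))),
      (w : FreeGroup (Fin 2)) =
          u * ⁅FreeGroup.of (0 : Fin 2), FreeGroup.of (1 : Fin 2)⁆ * u⁻¹ →
      ((expy u % 4 = 0 ∨ expy u % 4 = 1) → κ w = Multiplicative.ofAdd (1 : ℤ)) ∧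
      ((expy u % 4 = 2 ∨ expy u % 4 = 3) → κ w = Multiplicative.ofAdd (-1 : ℤ)))
    (z : ↥(commutator (FreeGroup (Fin 2))))
    (L : List (FreeGroup (Fin 2))) (hL : L ≠ [])
    (hz : (z : FreeGroup (Fin 2)) = (L.map (fun u => u ^ 4)).prod) :
    (4 : ℤ) ∣ Multiplicative.toAdd (κ z) :=
  stmt_16_general κ hκ z L hz
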